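/- Let d ≥ 1, let Φ be a superpositive (i.e., 1-superpositive) linear map on the d×d complex matrices, and let ρ be a positive semidefinite matrix indexed by Fin d × Fin d. Then (id_d ⊗ Φ)(ρ) is separable (1-separable). -/

import Mathlib

open Matrix Kronecker
open scoped ComplexOrder

noncomputable section

abbrev Mat (d : ℕ) := Matrix (Fin d) (Fin d) ℂ

abbrev MatMap (d : ℕ) := Mat d →ₗ[ℂ] Mat d

abbrev Mat2 (d : ℕ) := Matrix (Fin d × Fin d) (Fin d × Fin d) ℂ

/-- The blockwise action of `id_I ⊗ Φ` on matrices indexed by `I × Fin d`: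
`((id ⊗ Φ) M)((i,a),(j,b))` is the `(a,b)` entry of `Φ` applied to the `(i,j)` block of `M`. -/
def tensId {d : ℕ} (I : Type) (Φ : Mat d → Mat d)
    (M : Matrix (I × Fin d) (I × Fin d) ℂ) : Matrix (I × Fin d) (I × Fin d) ℂ :=
  Matrix.of fun p q => Φ (Matrix.of fun a b => M (p.1, a) (q.1, b)) p.2 q.2

/-- `Φ` is `k`-positive: `id_{Fin k} ⊗ Φ` sends PSD matrices to PSD matrices. -/
def kPositive (d k : ℕ) (Φ : Mat d → Mat d) : Prop :=
  ∀ M : Matrix (Fin k × Fin d) (Fin k × Fin d) ℂ,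
    M.PosSemidef → (tensId (Fin k) Φ M).PosSemidef

/-- `Φ` is completely positive: `k`-positive for every positive integer `k`. -/
def CompletelyPositive (d : ℕ) (Φ : Mat d → Mat d) : Prop :=
  ∀ k : ℕ, 0 < k → kPositive d k Φ

/-- `Φ` is `k`-superpositive: a finite sum of maps `Ad_{a_i} : x ↦ aᵢ* x aᵢ`
with `rank aᵢ ≤ k`. -/
def kSuperpositive (d k : ℕ) (Φ : Mat d → Mat d) : Prop :=
  ∃ (n : ℕ) (a : Fin n → Mat d),
    (∀ i, (a i).rank ≤ k) ∧ ∀ x, Φ x = ∑ i, (a i)ᴴ * x * a i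

/-- The Choi matrix of `Φ`: `C_Φ((i,a),(j,b)) = Φ(e_{ij})(a,b)`. -/
def choi {d : ℕ} (Φ : Mat d → Mat d) : Mat2 d :=
  Matrix.of fun p q => Φ (Matrix.single p.1 q.1 (1 : ℂ)) p.2 q.2

/-- `v` has Schmidt rank at most `k`: `v = ∑_{l<k} φ_l ⊗ ψ_l`. -/
def SchmidtRankLE (d k : ℕ) (v : Fin d × Fin d → ℂ) : Prop :=
  ∃ φ ψ : Fin k → Fin d → ℂ, v = fun p => ∑ l, φ l p.1 * ψ l p.2

/-- `A` is `k`-block positive: Hermitian and `⟨v, A v⟩ ≥ 0` for every `v` of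
Schmidt rank at most `k`. -/
def kBlockPositive (d k : ℕ) (A : Mat2 d) : Prop :=
  A.IsHermitian ∧ ∀ v : Fin d × Fin d → ℂ, SchmidtRankLE d k v → 0 ≤ star v ⬝ᵥ A *ᵥ v

/-- `b` is `k`-separable: a finite sum of rank-one matrices `v v*` with `v` of
Schmidt rank at most `k`. -/
def kSeparable (d k : ℕ) (b : Mat2 d) : Prop :=
  ∃ (n : ℕ) (v : Fin n → (Fin d × Fin d → ℂ)),
    (∀ i, SchmidtRankLE d k (v i)) ∧ b = ∑ i, Matrix.vecMulVec (v i) (star (v i))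

/-- `Φ` preserves Hermiticity. -/
def HermPreserving (d : ℕ) (Φ : Mat d → Mat d) : Prop :=
  ∀ x : Mat d, x.IsHermitian → (Φ x).IsHermitian

/-- The map `Ad_a : x ↦ a* x a`. -/
def adFun {d : ℕ} (a : Mat d) : Mat d → Mat d := fun x => aᴴ * x * a

/-- Elementary tensor of two vectors: `(φ ⊗ ψ)(i,a) = φ(i)·ψ(a)`. -/
def tensorVec {d : ℕ} (φ ψ : Fin d → ℂ) : Fin d × Fin d → ℂ := fun p => φ p.1 * ψ p.2

/-- The unnormalized maximally entangled vector `ψ₊ = ∑ᵢ eᵢ ⊗ eᵢ`. -/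
def psiPlus (d : ℕ) : Fin d × Fin d → ℂ := fun p => if p.1 = p.2 then 1 else 0

/-- `P₊ = ψ₊ ψ₊*`. -/
def Pplus (d : ℕ) : Mat2 d := Matrix.vecMulVec (psiPlus d) (star (psiPlus d))

/-- The transpose, as a linear map on matrices. -/
def transLM (d : ℕ) : MatMap d where
  toFun x := xᵀ
  map_add' x y := by simp
  map_smul' c x := by simp

/-!
Write `ρ = ∑ₖ vₖ vₖ*` and `Φ = ∑ᵢ Ad_{aᵢ}`. Since `id ⊗ Ad_a` is conjugation by `1 ⊗ a`, the matrix
`(id ⊗ Φ)(ρ)` is the sum of the rank-one matrices `wᵢₖ wᵢₖ*` with `wᵢₖ = (1 ⊗ aᵢ*) vₖ`. When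
`aᵢ* = c rᵀ` has rank one, `(1 ⊗ c rᵀ) v = (∑_b r_b v(·, b)) ⊗ c` is a product vector.
-/

theorem Matrix.exists_eq_vecMulVec_of_rank_le_one {m n K : Type*} [Fintype m] [Fintype n] [Field K]
    {a : Matrix m n K} (h : a.rank ≤ 1) : ∃ (c : m → K) (r : n → K), a = vecMulVec c r := by
  rw [Matrix.rank_eq_finrank_span_cols] at h
  obtain ⟨v, hv⟩ := finrank_le_one_iff.mp h
  choose f hf using fun j => hv ⟨aᵀ j, Submodule.subset_span ⟨j, rfl⟩⟩
  refine ⟨(v : m → K), f, ?_⟩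
  ext i j
  simpa [vecMulVec_apply, mul_comm] using (congrFun (congrArg Subtype.val (hf j)) i).symm

theorem Matrix.conjTranspose_mul_vecMulVec_self_mul {m n α : Type*} [Fintype m]
    [NonUnitalSemiring α] [StarRing α] (B : Matrix m n α) (v : m → α) :
    Bᴴ * vecMulVec v (star v) * B = vecMulVec (Bᴴ *ᵥ v) (star (Bᴴ *ᵥ v)) := by
  rw [mul_vecMulVec, vecMulVec_mul, star_mulVec, conjTranspose_conjTranspose]

section Separable

variable {d k : ℕ}

theorem kSeparable_zero : kSeparable d k 0 :=
  ⟨0, Fin.elim0, fun i => i.elim0, by simp⟩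

theorem kSeparable.add {A B : Mat2 d} (hA : kSeparable d k A) (hB : kSeparable d k B) :
    kSeparable d k (A + B) := by
  obtain ⟨n, v, hv, rfl⟩ := hA
  obtain ⟨m, w, hw, rfl⟩ := hB
  refine ⟨n + m, Fin.append v w, Fin.addCases (by simpa using hv) (by simpa using hw), ?_⟩
  simp [Fin.sum_univ_add]

theorem kSeparable_sum {ι : Type*} (s : Finset ι) {A : ι → Mat2 d}
    (h : ∀ i ∈ s, kSeparable d k (A i)) : kSeparable d k (∑ i ∈ s, A i) := by
  classical
  induction s using Finset.induction_on with
  | empty => simpa using kSeparable_zero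
  | insert i s hi ih =>
    rw [Finset.sum_insert hi]
    exact (h i (s.mem_insert_self i)).add (ih fun j hj => h j (Finset.mem_insert_of_mem hj))

theorem kSeparable_vecMulVec_self {v : Fin d × Fin d → ℂ} (hv : SchmidtRankLE d k v) :
    kSeparable d k (vecMulVec v (star v)) :=
  ⟨1, fun _ => v, fun _ => hv, by simp⟩

end Separable

section TensId

variable {d : ℕ} {I : Type}

theorem tensId_sum {ι : Type*} (s : Finset ι) (Φ : ι → Mat d → Mat d)
    (M : Matrix (I × Fin d) (I × Fin d) ℂ) :
    tensId I (∑ i ∈ s, Φ i) M = ∑ i ∈ s, tensId I (Φ i) M := by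
  ext p q
  simp [tensId, Finset.sum_apply, Matrix.sum_apply]

theorem tensId_adFun [Fintype I] [DecidableEq I] (a : Mat d) (M : Matrix (I × Fin d) (I × Fin d) ℂ) :
    tensId I (adFun a) M = (1 ⊗ₖ a)ᴴ * M * (1 ⊗ₖ a) := by
  ext p q
  simp [tensId, adFun, mul_apply, Fintype.sum_prod_type, one_apply, apply_ite (starRingEnd ℂ),
    ite_mul]

theorem schmidtRankLE_one_kronecker_vecMulVec_mulVec (c r : Fin d → ℂ) (v : Fin d × Fin d → ℂ) :
    SchmidtRankLE d 1 (((1 : Mat d) ⊗ₖ vecMulVec c r) *ᵥ v) := by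
  refine ⟨fun _ j => ∑ b, r b * v (j, b), fun _ => c, ?_⟩
  ext p
  simp only [mulVec, dotProduct, kroneckerMap_apply, one_apply, vecMulVec_apply, ite_mul, one_mul,
    zero_mul, Fintype.sum_prod_type, Finset.sum_ite_irrel, Finset.sum_const_zero, Finset.sum_ite_eq,
    Finset.mem_univ, ↓reduceIte, Finset.univ_unique, Finset.sum_const, Finset.card_singleton,
    one_smul]
  rw [Finset.sum_mul]
  exact Finset.sum_congr rfl fun b _ => by ring

end TensId

theorem stmt17_general (d : ℕ) (Φ : MatMap d) (hΦ : kSuperpositive d 1 ⇑Φ)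
    (ρ : Mat2 d) (hρ : ρ.PosSemidef) :
    kSeparable d 1 (tensId (Fin d) ⇑Φ ρ) := by
  obtain ⟨n, a, hrank, hΦa⟩ := hΦ
  obtain ⟨m, v, rfl⟩ := posSemidef_iff_eq_sum_vecMulVec.mp hρ
  have hΦ_sum : ⇑Φ = ∑ i, adFun (a i) := funext fun x => by simp [hΦa, adFun, Finset.sum_apply]
  rw [hΦ_sum, tensId_sum]
  refine kSeparable_sum _ fun i _ => ?_
  obtain ⟨c, r, hcr⟩ :=
    exists_eq_vecMulVec_of_rank_le_one ((rank_conjTranspose (a i)).trans_le (hrank i))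
  simp_rw [tensId_adFun, Finset.mul_sum, Finset.sum_mul, conjTranspose_mul_vecMulVec_self_mul]
  refine kSeparable_sum _ fun k _ => kSeparable_vecMulVec_self ?_
  rw [conjTranspose_kronecker, conjTranspose_one, hcr]
  exact schmidtRankLE_one_kronecker_vecMulVec_mulVec c r (v k)

/-- if `Φ` is superpositive (`1`-superpositive) and `ρ` is positive
semidefinite, then `(id_d ⊗ Φ)(ρ)` is separable (`1`-separable). -/
theorem stmt17 (d : ℕ) (hd : 1 ≤ d) (Φ : MatMap d) (hΦ : kSuperpositive d 1 ⇑Φ)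
    (ρ : Mat2 d) (hρ : ρ.PosSemidef) :
    kSeparable d 1 (tensId (Fin d) ⇑Φ ρ) :=
  stmt17_general d Φ hΦ ρ hρ
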